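/- arXiv:2306.17329 — 2 statements merged into one kernel-verified Lean document; each statement's English description precedes it below -/
import Mathlib

section
/- Suppose the eigenvalues of a positive trace-class operator Σ satisfy η_i ≤ C̄ · i^(−α) for all i ≥ 1, where α > 1 and C̄ > 0. Then for every λ > 0, the effective dimension N(λ) := Σ_{i≥1} η_i/(η_i + λ) satisfies N(λ) ≤ A · λ^(−1/α), where A = C̄^(1/α) · ∫₀^∞ (1 + x^α)^(−1) dx (a finite constant depending only on C̄ and α). -/
open MeasureTheory Set

/-!
Comparing `η_i` with the extremal sequence `C̄ (i+1)^(-α)` and using that `t ↦ t/(t+λ)` is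
increasing, each term is at most `(1 + (b(i+1))^α)⁻¹` with `b = (λ/C̄)^(1/α)`. This function of
`i + 1` is antitone, so its sum over `i` is at most `∫₀^∞ (1 + (bx)^α)⁻¹ dx`, and the substitution
`y = bx` turns that integral into `b⁻¹ ∫₀^∞ (1 + y^α)⁻¹ dy = C̄^(1/α) λ^(-1/α) ∫₀^∞ (1 + y^α)⁻¹ dy`.
-/

lemma div_add_le_div_add {a b c : ℝ} (ha : 0 ≤ a) (hab : a ≤ b) (hc : 0 < c) :
    a / (a + c) ≤ b / (b + c) := by
  rw [div_le_div_iff₀ (by linarith) (by linarith)]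
  nlinarith

lemma antitoneOn_inv_one_add_rpow {α : ℝ} (hα : 0 ≤ α) :
    AntitoneOn (fun x : ℝ => (1 + x ^ α)⁻¹) (Ici 0) := by
  intro x hx y _ hxy
  have hxy_pow : x ^ α ≤ y ^ α := Real.rpow_le_rpow hx hxy hα
  have hx_pow : 0 ≤ x ^ α := Real.rpow_nonneg hx α
  exact inv_anti₀ (by linarith) (by linarith)

lemma integrableOn_Ioi_inv_one_add_rpow {α : ℝ} (hα : 1 < α) :
    IntegrableOn (fun x : ℝ => (1 + x ^ α)⁻¹) (Ioi 0) := by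
  have hcont : ContinuousOn (fun x : ℝ => (1 + x ^ α)⁻¹) (Ici 0) := by
    refine ContinuousOn.inv₀ (by fun_prop (disch := intros; positivity)) fun x hx => ?_
    have : 0 ≤ x ^ α := Real.rpow_nonneg hx α
    positivity
  rw [← Ioc_union_Ioi_eq_Ioi zero_le_one]
  refine IntegrableOn.union ?_ ?_
  · exact (hcont.mono Icc_subset_Ici_self).integrableOn_Icc.mono_set Ioc_subset_Icc_self
  · -- on `(1, ∞)` the integrand is dominated by `x^(-α)`, integrable since `-α < -1`
    refine (integrableOn_Ioi_rpow_of_lt (neg_lt_neg hα) one_pos).mono'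
      ((hcont.mono (Ioi_subset_Ici zero_le_one)).aestronglyMeasurable measurableSet_Ioi) ?_
    filter_upwards [self_mem_ae_restrict measurableSet_Ioi] with x hx
    have hx_pos : 0 < x := lt_trans one_pos hx
    have hx_pow : 0 < x ^ α := Real.rpow_pos_of_pos hx_pos α
    rw [Real.norm_of_nonneg (by positivity), Real.rpow_neg hx_pos.le]
    exact inv_anti₀ hx_pow (by linarith)

lemma sum_range_le_integral_Ioi_of_antitoneOn {f : ℝ → ℝ} (hf : AntitoneOn f (Ici 0))
    (hf_int : IntegrableOn f (Ioi 0)) (hf_nonneg : ∀ x ∈ Ioi 0, 0 ≤ f x) (n : ℕ) :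
    ∑ i ∈ Finset.range n, f (i + 1) ≤ ∫ x in Ioi 0, f x := by
  have hsum : ∑ i ∈ Finset.range n, f (i + 1) ≤ ∫ x in (0 : ℝ)..n, f x := by
    simpa using (hf.mono fun x hx => hx.1).sum_le_integral (x₀ := 0) (a := n)
  calc ∑ i ∈ Finset.range n, f (i + 1) ≤ ∫ x in (0 : ℝ)..n, f x := hsum
    _ = ∫ x in Ioc 0 (n : ℝ), f x := intervalIntegral.integral_of_le n.cast_nonneg
    _ ≤ ∫ x in Ioi 0, f x :=
        setIntegral_mono_set hf_int (ae_restrict_of_forall_mem measurableSet_Ioi hf_nonneg)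
          Ioc_subset_Ioi_self.eventuallyLE

lemma tsum_le_inv_mul_integral_Ioi_of_antitoneOn {a : ℕ → ℝ} {g : ℝ → ℝ} {b : ℝ} (hb : 0 < b)
    (hg : AntitoneOn g (Ici 0)) (hg_int : IntegrableOn g (Ioi 0))
    (hg_nonneg : ∀ x ∈ Ioi 0, 0 ≤ g x) (ha : ∀ i, 0 ≤ a i) (hag : ∀ i, a i ≤ g (b * (i + 1))) :
    ∑' i, a i ≤ b⁻¹ * ∫ x in Ioi 0, g x := by
  have hg_scaled : AntitoneOn (fun x => g (b * x)) (Ici 0) := fun x hx y hy hxy =>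
    hg (mul_nonneg hb.le hx) (mul_nonneg hb.le hy) (mul_le_mul_of_nonneg_left hxy hb.le)
  have hg_scaled_int : IntegrableOn (fun x => g (b * x)) (Ioi 0) := by
    rwa [integrableOn_Ioi_comp_mul_left_iff g 0 hb, mul_zero]
  have hint : ∫ x in Ioi 0, g (b * x) = b⁻¹ * ∫ x in Ioi 0, g x := by
    rw [integral_comp_mul_left_Ioi g 0 hb, mul_zero, smul_eq_mul]
  refine Real.tsum_le_of_sum_range_le ha fun n => ?_
  calc ∑ i ∈ Finset.range n, a i ≤ ∑ i ∈ Finset.range n, g (b * (i + 1)) :=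
        Finset.sum_le_sum fun i _ => hag i
    _ ≤ ∫ x in Ioi 0, g (b * x) :=
        sum_range_le_integral_Ioi_of_antitoneOn hg_scaled hg_scaled_int
          (fun x hx => hg_nonneg _ (mul_pos hb hx)) n
    _ = b⁻¹ * ∫ x in Ioi 0, g x := hint

lemma mul_rpow_neg_div_add_eq {C lam α x : ℝ} (hC : 0 < C) (hlam : 0 < lam) (hα : α ≠ 0)
    (hx : 0 < x) :
    C * x ^ (-α) / (C * x ^ (-α) + lam) = (1 + ((lam / C) ^ (1 / α) * x) ^ α)⁻¹ := by
  have hpow : ((lam / C) ^ (1 / α)) ^ α = lam / C := by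
    rw [← Real.rpow_mul (by positivity), one_div_mul_cancel hα, Real.rpow_one]
  have hx_pow : 0 < x ^ α := Real.rpow_pos_of_pos hx α
  rw [Real.mul_rpow (by positivity) hx.le, hpow, Real.rpow_neg hx.le]
  field_simp

theorem stmt3_general (η : ℕ → ℝ) (C α : ℝ) (hC : 0 < C) (hα : 1 < α)
    (hη : ∀ i, 0 ≤ η i)
    (hdecay : ∀ i : ℕ, η i ≤ C * ((i : ℝ) + 1) ^ (-α))
    (lam : ℝ) (hlam : 0 < lam) :
    ∑' i : ℕ, η i / (η i + lam)
      ≤ (C ^ (1 / α) * ∫ x in Set.Ioi (0 : ℝ), (1 + x ^ α)⁻¹) * lam ^ (-(1 / α)) := by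
  have hα_pos : 0 < α := by linarith
  set b := (lam / C) ^ (1 / α)
  have hb : 0 < b := by positivity
  have hterm (i : ℕ) : η i / (η i + lam) ≤ (1 + (b * (i + 1)) ^ α)⁻¹ := by
    rw [← mul_rpow_neg_div_add_eq hC hlam hα_pos.ne' (by positivity)]
    exact div_add_le_div_add (hη i) (hdecay i) hlam
  have hb_inv : b⁻¹ = C ^ (1 / α) * lam ^ (-(1 / α)) := by
    rw [← Real.inv_rpow (by positivity), inv_div, Real.div_rpow hC.le hlam.le, div_eq_mul_inv,
      ← Real.rpow_neg hlam.le]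
  calc ∑' i, η i / (η i + lam) ≤ b⁻¹ * ∫ x in Ioi 0, (1 + x ^ α)⁻¹ :=
        tsum_le_inv_mul_integral_Ioi_of_antitoneOn hb (antitoneOn_inv_one_add_rpow hα_pos.le)
          (integrableOn_Ioi_inv_one_add_rpow hα)
          (fun x hx => by have := Real.rpow_nonneg (le_of_lt hx) α; positivity)
          (fun i => div_nonneg (hη i) (by linarith [hη i])) hterm
    _ = _ := by rw [hb_inv]; ring

/-- If the (nonnegative, summable) eigenvalues of a positive trace-class operator satisfy
`η_i ≤ C̄ i^(-α)` with `α > 1`, then the effective dimension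
`N(λ) = Σ_i η_i/(η_i + λ)` satisfies `N(λ) ≤ C̄^(1/α) (∫₀^∞ (1+x^α)⁻¹ dx) λ^(-1/α)`. -/
theorem stmt3 (η : ℕ → ℝ) (C α : ℝ) (hC : 0 < C) (hα : 1 < α)
    (hη : ∀ i, 0 ≤ η i) (hsum : Summable η)
    (hdecay : ∀ i : ℕ, η i ≤ C * ((i : ℝ) + 1) ^ (-α))
    (lam : ℝ) (hlam : 0 < lam) :
    ∑' i : ℕ, η i / (η i + lam)
      ≤ (C ^ (1 / α) * ∫ x in Set.Ioi (0 : ℝ), (1 + x ^ α)⁻¹) * lam ^ (-(1 / α)) :=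
  stmt3_general η C α hC hα hη hdecay lam hlam
end

section
/- Let Σ and Σ̂ be positive self-adjoint bounded operators on a Hilbert space H and λ > 0. If the operator B := (Σ + λI)^(−1/2)(Σ − Σ̂)(Σ + λI)^(−1/2) satisfies ‖B‖ ≤ 1/2, then ‖(Σ̂ + λI)^(−1/2)(Σ + λI)^(1/2)‖ ≤ √2. -/
open ContinuousLinearMap

/-!
With `a' = Σ + λ` and `b' = Σ̂ + λ`, the perturbation is `B = a'^(-1/2) (a' - b') a'^(-1/2)`, so
`1 - B = a'^(-1/2) b' a'^(-1/2)`. Hence `T = a'^(1/2) b'^(-1) a'^(1/2)` is a left inverse of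
`1 - B`, and the Neumann series gives `‖T‖ ≤ (1 - ‖B‖)⁻¹ ≤ 2`. By the C⋆-identity
`‖b'^(-1/2) a'^(1/2)‖² = ‖T‖`.
-/

lemma continuousOn_add_const_rpow {A : Type*} [Ring A] [Algebra ℝ A] {a : A} {lam : ℝ}
    (hspec : ∀ x ∈ spectrum ℝ a, 0 < x + lam) (r : ℝ) :
    ContinuousOn (fun x : ℝ => (x + lam) ^ r) (spectrum ℝ a) :=
  ContinuousOn.rpow_const (by fun_prop) fun x hx => Or.inl (hspec x hx).ne'

section ShiftedRpow

variable {A : Type*} [Ring A] [StarRing A] [TopologicalSpace A] [Algebra ℝ A]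
  [ContinuousFunctionalCalculus ℝ A IsSelfAdjoint] {a : A} {lam : ℝ}

lemma cfc_add_const_rpow_mul (hspec : ∀ x ∈ spectrum ℝ a, 0 < x + lam) (r s : ℝ) :
    cfc (fun x : ℝ => (x + lam) ^ r) a * cfc (fun x : ℝ => (x + lam) ^ s) a =
      cfc (fun x : ℝ => (x + lam) ^ (r + s)) a := by
  rw [← cfc_mul _ _ a (continuousOn_add_const_rpow hspec r) (continuousOn_add_const_rpow hspec s)]
  exact cfc_congr fun x hx => (Real.rpow_add (hspec x hx) r s).symm

lemma cfc_add_const_rpow_zero (ha : IsSelfAdjoint a) :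
    cfc (fun x : ℝ => (x + lam) ^ (0 : ℝ)) a = 1 := by
  simp only [Real.rpow_zero]
  exact cfc_one ℝ a ha

lemma cfc_add_const_rpow_one (ha : IsSelfAdjoint a) :
    cfc (fun x : ℝ => (x + lam) ^ (1 : ℝ)) a = a + algebraMap ℝ A lam := by
  simp only [Real.rpow_one]
  exact (cfc_add_const lam id a (by fun_prop) ha).trans (by rw [cfc_id ℝ a ha])

end ShiftedRpow

lemma mul_mul_mul_one_sub_eq_one {R : Type*} [Ring R] {p q c x y : R} (hpq : p * q = 1)
    (hqxq : q * x * q = 1) (hccy : c * c * y = 1) :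
    p * c * c * p * (1 - q * (x - y) * q) = 1 := by
  have hsub : 1 - q * (x - y) * q = q * y * q := by rw [← hqxq]; noncomm_ring
  calc p * c * c * p * (1 - q * (x - y) * q) = p * c * c * (p * q) * y * q := by
        rw [hsub]; noncomm_ring
    _ = p * (c * c * y) * q := by rw [hpq]; noncomm_ring
    _ = 1 := by rw [hccy, mul_one, hpq]

lemma norm_le_inv_one_sub_of_mul_one_sub_eq_one {R : Type*} [NormedRing R] [NormOneClass R]
    [HasSummableGeomSeries R] {t b : R} (h : t * (1 - b) = 1) (hb : ‖b‖ < 1) :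
    ‖t‖ ≤ (1 - ‖b‖)⁻¹ := by
  have ht : t = ∑' n : ℕ, b ^ n := by
    calc t = t * ((1 - b) * ∑' n : ℕ, b ^ n) := by rw [mul_neg_geom_series b hb, mul_one]
      _ = ∑' n : ℕ, b ^ n := by rw [← mul_assoc, h, one_mul]
  simpa [ht] using tsum_geometric_le_of_norm_lt_one b hb

theorem CStarAlgebra.norm_cfc_add_const_rpow_mul_le_sqrt_two {A : Type*} [CStarAlgebra A]
    [PartialOrder A] [StarOrderedRing A] {a b : A} (ha : 0 ≤ a) (hb : 0 ≤ b) {lam : ℝ}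
    (hlam : 0 < lam)
    (hB : ‖cfc (fun x : ℝ => (x + lam) ^ (-(1 / 2) : ℝ)) a * (a - b) *
        cfc (fun x : ℝ => (x + lam) ^ (-(1 / 2) : ℝ)) a‖ ≤ 1 / 2) :
    ‖cfc (fun x : ℝ => (x + lam) ^ (-(1 / 2) : ℝ)) b *
        cfc (fun x : ℝ => (x + lam) ^ ((1 / 2) : ℝ)) a‖ ≤ Real.sqrt 2 := by
  nontriviality A
  have hspec_a : ∀ x ∈ spectrum ℝ a, 0 < x + lam := fun x hx => by
    linarith [spectrum_nonneg_of_nonneg ha hx]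
  have hspec_b : ∀ x ∈ spectrum ℝ b, 0 < x + lam := fun x hx => by
    linarith [spectrum_nonneg_of_nonneg hb hx]
  set q := cfc (fun x : ℝ => (x + lam) ^ (-(1 / 2) : ℝ)) a
  set p := cfc (fun x : ℝ => (x + lam) ^ ((1 / 2) : ℝ)) a
  set c := cfc (fun x : ℝ => (x + lam) ^ (-(1 / 2) : ℝ)) b
  have hpq : p * q = 1 := by
    rw [cfc_add_const_rpow_mul hspec_a, add_neg_cancel, cfc_add_const_rpow_zero ha.isSelfAdjoint]
  have hqxq : q * (a + algebraMap ℝ A lam) * q = 1 := by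
    rw [← cfc_add_const_rpow_one ha.isSelfAdjoint, cfc_add_const_rpow_mul hspec_a,
      cfc_add_const_rpow_mul hspec_a, show (-(1 / 2) + 1 + -(1 / 2) : ℝ) = 0 by norm_num,
      cfc_add_const_rpow_zero ha.isSelfAdjoint]
  have hccy : c * c * (b + algebraMap ℝ A lam) = 1 := by
    rw [← cfc_add_const_rpow_one hb.isSelfAdjoint, cfc_add_const_rpow_mul hspec_b,
      cfc_add_const_rpow_mul hspec_b, show (-(1 / 2) + -(1 / 2) + 1 : ℝ) = 0 by norm_num,
      cfc_add_const_rpow_zero hb.isSelfAdjoint]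
  have hT : star (c * p) * (c * p) * (1 - q * (a - b) * q) = 1 := by
    rw [star_mul, IsSelfAdjoint.cfc.star_eq, IsSelfAdjoint.cfc.star_eq, ← mul_assoc,
      ← add_sub_add_right_eq_sub a b (algebraMap ℝ A lam)]
    exact mul_mul_mul_one_sub_eq_one hpq hqxq hccy
  have hsq : ‖c * p‖ * ‖c * p‖ ≤ 2 := by
    calc ‖c * p‖ * ‖c * p‖ = ‖star (c * p) * (c * p)‖ := CStarRing.norm_star_mul_self.symm
      _ ≤ (1 - ‖q * (a - b) * q‖)⁻¹ := norm_le_inv_one_sub_of_mul_one_sub_eq_one hT (by linarith)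
      _ ≤ 2 := by rw [inv_le_comm₀ (by linarith) two_pos]; linarith
  rw [Real.le_sqrt (norm_nonneg _) zero_le_two, sq]
  exact hsq

/-- If `Σ, Σ̂` are positive self-adjoint bounded operators, `λ > 0`, and
`B = (Σ+λI)^(−1/2)(Σ−Σ̂)(Σ+λI)^(−1/2)` has `‖B‖ ≤ 1/2`, then
`‖(Σ̂+λI)^(−1/2)(Σ+λI)^(1/2)‖ ≤ √2` (operator powers via functional calculus). -/
theorem stmt18 {H : Type*} [NormedAddCommGroup H] [InnerProductSpace ℂ H] [CompleteSpace H]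
    (S Sh : H →L[ℂ] H) (hS : S.IsPositive) (hSh : Sh.IsPositive)
    (lam : ℝ) (hlam : 0 < lam)
    (hB : ‖cfc (fun x : ℝ => (x + lam) ^ (-(1 / 2) : ℝ)) S * (S - Sh) *
        cfc (fun x : ℝ => (x + lam) ^ (-(1 / 2) : ℝ)) S‖ ≤ 1 / 2) :
    ‖cfc (fun x : ℝ => (x + lam) ^ (-(1 / 2) : ℝ)) Sh *
        cfc (fun x : ℝ => (x + lam) ^ ((1 / 2) : ℝ)) S‖ ≤ Real.sqrt 2 :=
  CStarAlgebra.norm_cfc_add_const_rpow_mul_le_sqrt_two ((nonneg_iff_isPositive S).mpr hS)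
    ((nonneg_iff_isPositive Sh).mpr hSh) hlam hB
end
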